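/- arXiv:1908.02694 — 2 statements merged into one kernel-verified Lean document; each statement's English description precedes it below -/
import Mathlib

section
/- The expected integrated overall error, combining KL truncation and the active-subspace projection of the retained KL modes, satisfies E[ Ē ] ≤ μ(X)^{1/2} · [ ( Σ_{k=N+1}^∞ λ_k )^{1/2} + Σ_{k=1}^N δ_k ], where Ē(ξ) = ∫_X | f(x,ξ) − f̂_N(x,ξ) | dμ(x), f̂_N(x,ξ) = Σ_{k=1}^N g_k(ξ) φ_k(x), and the expectation is taken over ξ ∼ π. -/
/-!
Write `f - Σ_{k<N} g_k φ_k = (f - Σ_{k<N} F_k φ_k) + Σ_{k<N} (F_k - g_k) φ_k`. For fixed `ξ`,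
Cauchy–Schwarz on `X` bounds the `L¹(μ)` norm of the first term by `μ(X)^{1/2}` times its
`L²(μ)` norm, which by Parseval is `(Σ_{k≥N} F_k(ξ)²)^{1/2}`, and the `L¹(μ)` norm of each `φ_k`
by `μ(X)^{1/2}`. Integrating in `ξ`, Cauchy–Schwarz for the probability measure `π` bounds
`E[(Σ_{k≥N} F_k²)^{1/2}]` by `(Σ_{k≥N} λ_k)^{1/2}` and `E|F_k - g_k|` by `δ_k`.

All estimates are made in `ℝ≥0∞` (lower integrals and `eLpNorm`), so the integrability of the
error in `ξ` never has to be established: if it fails, the left-hand side is `0`.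
-/

open MeasureTheory
open scoped ENNReal

namespace MeasureTheory

section LpBounds

variable {α : Type*} [MeasurableSpace α] {μ : Measure α}

theorem eLpNorm_two_sq {ε : Type*} [ENorm ε] (f : α → ε) :
    eLpNorm f 2 μ ^ 2 = ∫⁻ x, ‖f x‖ₑ ^ 2 ∂μ := by
  simpa using eLpNorm_nnreal_pow_eq_lintegral (f := f) (μ := μ) (p := 2) two_ne_zero

theorem MemLp.eLpNorm_two_sq_eq_ofReal {f : α → ℝ} (hf : MemLp f 2 μ) :
    eLpNorm f 2 μ ^ 2 = ENNReal.ofReal (∫ x, f x ^ 2 ∂μ) := by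
  rw [eLpNorm_two_sq, ofReal_integral_eq_lintegral_ofReal hf.integrable_sq
    (ae_of_all _ fun x => sq_nonneg (f x))]
  simp_rw [Real.enorm_eq_ofReal_abs, ← ENNReal.ofReal_pow (abs_nonneg _), sq_abs]

theorem enorm_integral_mul_le {f g : α → ℝ} (hf : AEStronglyMeasurable f μ)
    (hg : AEStronglyMeasurable g μ) :
    ‖∫ x, f x * g x ∂μ‖ₑ ≤ eLpNorm f 2 μ * eLpNorm g 2 μ :=
  calc ‖∫ x, f x * g x ∂μ‖ₑ ≤ eLpNorm (f • g) 1 μ :=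
        (enorm_integral_le_lintegral_enorm _).trans_eq eLpNorm_one_eq_lintegral_enorm.symm
    _ ≤ eLpNorm f 2 μ * eLpNorm g 2 μ :=
        eLpNorm_smul_le_mul_eLpNorm (p := 2) (q := 2) (r := 1) hg hf

theorem eLpNorm_one_le_sqrt_measure_univ_mul [IsFiniteMeasure μ] {E : Type*}
    [NormedAddCommGroup E] {f : α → E} (hf : AEStronglyMeasurable f μ) :
    eLpNorm f 1 μ ≤ ENNReal.ofReal √(μ Set.univ).toReal * eLpNorm f 2 μ := by
  have h := eLpNorm_le_eLpNorm_mul_rpow_measure_univ (p := 1) (q := 2) one_le_two hf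
  rw [mul_comm] at h
  convert h using 2
  rw [Real.sqrt_eq_rpow, ← ENNReal.ofReal_rpow_of_nonneg ENNReal.toReal_nonneg (by norm_num),
    ENNReal.ofReal_toReal (measure_ne_top μ _)]
  norm_num

theorem lintegral_enorm_le_ofReal_of_integral_sq_le [IsProbabilityMeasure μ] {f : α → ℝ}
    (hf : MemLp f 2 μ) {δ : ℝ} (hδ : 0 ≤ δ) (h : ∫ x, f x ^ 2 ∂μ ≤ δ ^ 2) :
    ∫⁻ x, ‖f x‖ₑ ∂μ ≤ ENNReal.ofReal δ := by
  have hsq : eLpNorm f 2 μ ^ 2 ≤ ENNReal.ofReal δ ^ 2 := by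
    rw [hf.eLpNorm_two_sq_eq_ofReal, ← ENNReal.ofReal_pow hδ]
    exact ENNReal.ofReal_le_ofReal h
  rw [← eLpNorm_one_eq_lintegral_enorm]
  exact (eLpNorm_le_eLpNorm_of_exponent_le one_le_two hf.1).trans
    ((ENNReal.pow_le_pow_left_iff two_ne_zero).1 hsq)

theorem eLpNorm_sub_sum_mul_le {ι : Type*} (s : Finset ι) {u : α → ℝ} {φ : ι → α → ℝ}
    (a b : ι → ℝ) {p : ℝ≥0∞} (hp : 1 ≤ p) (hu : AEStronglyMeasurable u μ)
    (hφ : ∀ i ∈ s, AEStronglyMeasurable (φ i) μ) :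
    eLpNorm (fun x => u x - ∑ i ∈ s, b i * φ i x) p μ ≤
      eLpNorm (fun x => u x - ∑ i ∈ s, a i * φ i x) p μ +
        ∑ i ∈ s, ‖a i - b i‖ₑ * eLpNorm (φ i) p μ := by
  have hsplit : (fun x => u x - ∑ i ∈ s, b i * φ i x) =
      (fun x => u x - ∑ i ∈ s, a i * φ i x) + ∑ i ∈ s, (a i - b i) • φ i := by
    ext x
    simp only [Pi.add_apply, Finset.sum_apply, Pi.smul_apply, smul_eq_mul, sub_mul,
      Finset.sum_sub_distrib]
    ring
  have hmeas : AEStronglyMeasurable (fun x => u x - ∑ i ∈ s, a i * φ i x) μ :=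
    hu.sub (Finset.aestronglyMeasurable_fun_sum _ fun i hi => (hφ i hi).const_mul _)
  rw [hsplit]
  refine (eLpNorm_add_le hmeas
    (Finset.aestronglyMeasurable_sum _ fun i hi => (hφ i hi).const_smul _) hp).trans ?_
  gcongr
  refine (eLpNorm_sum_le (fun i hi => (hφ i hi).const_smul _) hp).trans ?_
  gcongr with i
  exact eLpNorm_const_smul_le

theorem eLpNorm_one_sub_sum_mul_le [IsFiniteMeasure μ] {ι : Type*} (s : Finset ι) {u : α → ℝ}
    {φ : ι → α → ℝ} (a b : ι → ℝ) (hu : AEStronglyMeasurable u μ)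
    (hφ : ∀ i ∈ s, AEStronglyMeasurable (φ i) μ) (hφ_le : ∀ i ∈ s, eLpNorm (φ i) 2 μ ≤ 1) :
    eLpNorm (fun x => u x - ∑ i ∈ s, b i * φ i x) 1 μ ≤
      ENNReal.ofReal √(μ Set.univ).toReal *
        (eLpNorm (fun x => u x - ∑ i ∈ s, a i * φ i x) 2 μ + ∑ i ∈ s, ‖a i - b i‖ₑ) := by
  refine (eLpNorm_one_le_sqrt_measure_univ_mul
    (hu.sub (Finset.aestronglyMeasurable_fun_sum _ fun i hi => (hφ i hi).const_mul _))).trans ?_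
  gcongr
  refine (eLpNorm_sub_sum_mul_le s a b one_le_two hu hφ).trans ?_
  gcongr with i hi
  exact mul_le_of_le_one_right' (hφ_le i hi)

end LpBounds

section Prod

variable {α β : Type*} [MeasurableSpace α] [MeasurableSpace β] {μ : Measure α} {ν : Measure β}

theorem ofReal_integral_integral_abs_le (G : β → α → ℝ) :
    ENNReal.ofReal (∫ y, ∫ x, |G y x| ∂μ ∂ν) ≤ ∫⁻ y, eLpNorm (G y) 1 μ ∂ν :=
  calc ENNReal.ofReal (∫ y, ∫ x, |G y x| ∂μ ∂ν) ≤ ‖∫ y, ∫ x, |G y x| ∂μ ∂ν‖ₑ :=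
        Real.ofReal_le_enorm _
    _ ≤ ∫⁻ y, ‖∫ x, |G y x| ∂μ‖ₑ ∂ν := enorm_integral_le_lintegral_enorm _
    _ ≤ ∫⁻ y, eLpNorm (G y) 1 μ ∂ν := lintegral_mono fun y =>
        (enorm_integral_le_lintegral_enorm _).trans_eq (by simp [eLpNorm_one_eq_lintegral_enorm])

theorem ofReal_integral_integral_abs_sub_sum_le [IsFiniteMeasure μ] {ι : Type*} (s : Finset ι)
    {u : α → β → ℝ} {φ : ι → α → ℝ} {a b : ι → β → ℝ}
    (hu : ∀ᵐ y ∂ν, AEStronglyMeasurable (fun x => u x y) μ)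
    (hφ : ∀ i ∈ s, AEStronglyMeasurable (φ i) μ) (hφ_le : ∀ i ∈ s, eLpNorm (φ i) 2 μ ≤ 1)
    (ha : ∀ i ∈ s, AEStronglyMeasurable (a i) ν) (hb : ∀ i ∈ s, AEStronglyMeasurable (b i) ν) :
    ENNReal.ofReal (∫ y, ∫ x, |u x y - ∑ i ∈ s, b i y * φ i x| ∂μ ∂ν) ≤
      ENNReal.ofReal √(μ Set.univ).toReal *
        (∫⁻ y, eLpNorm (fun x => u x y - ∑ i ∈ s, a i y * φ i x) 2 μ ∂ν +
          ∑ i ∈ s, ∫⁻ y, ‖a i y - b i y‖ₑ ∂ν) := by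
  have hab : ∀ i ∈ s, AEMeasurable (fun y => ‖a i y - b i y‖ₑ) ν :=
    fun i hi => ((ha i hi).sub (hb i hi)).enorm
  rw [← lintegral_finsetSum' s hab, ← lintegral_add_right' _ (Finset.aemeasurable_fun_sum s hab),
    ← lintegral_const_mul' _ _ ENNReal.ofReal_ne_top]
  refine (ofReal_integral_integral_abs_le _).trans (lintegral_mono_ae ?_)
  filter_upwards [hu] with y hy
  exact eLpNorm_one_sub_sum_mul_le s _ _ hy hφ hφ_le

variable [SFinite μ] [SFinite ν]

theorem AEStronglyMeasurable.aemeasurable_eLpNorm_slice {f : α × β → ℝ}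
    (hf : AEStronglyMeasurable f (μ.prod ν)) {p : ℝ≥0∞} (hp0 : p ≠ 0) (hp : p ≠ ∞) :
    AEMeasurable (fun y => eLpNorm (fun x => f (x, y)) p μ) ν := by
  simp_rw [eLpNorm_eq_lintegral_rpow_enorm_toReal hp0 hp]
  exact (hf.enorm.pow_const _).lintegral_prod_left'.pow_const _

theorem lintegral_eLpNorm_two_sq_slice {f : α × β → ℝ} (hf : AEStronglyMeasurable f (μ.prod ν)) :
    ∫⁻ y, eLpNorm (fun x => f (x, y)) 2 μ ^ 2 ∂ν = eLpNorm f 2 (μ.prod ν) ^ 2 := by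
  simp_rw [eLpNorm_two_sq]
  exact (lintegral_prod_symm _ (hf.enorm.pow_const 2)).symm

theorem MemLp.ae_memLp_slice {f : α × β → ℝ} (hf : MemLp f 2 (μ.prod ν)) :
    ∀ᵐ y ∂ν, MemLp (fun x => f (x, y)) 2 μ := by
  have hfin : ∫⁻ y, eLpNorm (fun x => f (x, y)) 2 μ ^ 2 ∂ν ≠ ∞ := by
    rw [lintegral_eLpNorm_two_sq_slice hf.1]
    exact ENNReal.pow_ne_top hf.2.ne
  filter_upwards [hf.1.prodMk_right, ae_lt_top'
    ((hf.1.aemeasurable_eLpNorm_slice two_ne_zero ENNReal.ofNat_ne_top).pow_const 2) hfin]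
    with y hy hlt
  exact ⟨hy, by simpa using hlt⟩

theorem MemLp.integral_mul_slice {f : α × β → ℝ} (hf : MemLp f 2 (μ.prod ν)) {φ : α → ℝ}
    (hφ : MemLp φ 2 μ) : MemLp (fun y => ∫ x, f (x, y) * φ x ∂μ) 2 ν := by
  refine ⟨(hf.1.mul hφ.1.comp_fst).prod_swap.integral_prod_right', ?_⟩
  have hbound : ∀ᵐ y ∂ν, ‖∫ x, f (x, y) * φ x ∂μ‖ₑ ^ 2 ≤
      eLpNorm (fun x => f (x, y)) 2 μ ^ 2 * eLpNorm φ 2 μ ^ 2 := by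
    filter_upwards [hf.1.prodMk_right] with y hy
    rw [← mul_pow]
    gcongr
    exact enorm_integral_mul_le hy hφ.1
  have hsq : eLpNorm (fun y => ∫ x, f (x, y) * φ x ∂μ) 2 ν ^ 2 < ∞ :=
    calc _ = ∫⁻ y, ‖∫ x, f (x, y) * φ x ∂μ‖ₑ ^ 2 ∂ν := eLpNorm_two_sq _
      _ ≤ ∫⁻ y, eLpNorm (fun x => f (x, y)) 2 μ ^ 2 * eLpNorm φ 2 μ ^ 2 ∂ν :=
          lintegral_mono_ae hbound
      _ = eLpNorm f 2 (μ.prod ν) ^ 2 * eLpNorm φ 2 μ ^ 2 := by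
          rw [lintegral_mul_const' _ _ (ENNReal.pow_ne_top hφ.2.ne),
            lintegral_eLpNorm_two_sq_slice hf.1]
      _ < ∞ := by finiteness [hf.2, hφ.2]
  simpa using hsq

theorem lintegral_eLpNorm_slice_le_sqrt_tsum [IsProbabilityMeasure ν] {e : α × β → ℝ}
    (he : AEStronglyMeasurable e (μ.prod ν)) {c : ℕ → β → ℝ} (hc : ∀ k, MemLp (c k) 2 ν)
    (hc_sum : Summable fun k => ∫ y, c k y ^ 2 ∂ν)
    (he_sq : ∀ᵐ y ∂ν, eLpNorm (fun x => e (x, y)) 2 μ ^ 2 = ∑' k, ‖c k y‖ₑ ^ 2) :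
    ∫⁻ y, eLpNorm (fun x => e (x, y)) 2 μ ∂ν ≤
      ENNReal.ofReal √(∑' k, ∫ y, c k y ^ 2 ∂ν) := by
  set G := fun y => eLpNorm (fun x => e (x, y)) 2 μ
  have hS : 0 ≤ ∑' k, ∫ y, c k y ^ 2 ∂ν := tsum_nonneg fun k => integral_nonneg fun y => sq_nonneg _
  have hsq : eLpNorm G 2 ν ^ 2 = ENNReal.ofReal √(∑' k, ∫ y, c k y ^ 2 ∂ν) ^ 2 :=
    calc eLpNorm G 2 ν ^ 2 = ∫⁻ y, ∑' k, ‖c k y‖ₑ ^ 2 ∂ν := by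
          rw [eLpNorm_two_sq]; exact lintegral_congr_ae he_sq
      _ = ∑' k, ENNReal.ofReal (∫ y, c k y ^ 2 ∂ν) := by
          rw [lintegral_tsum fun k => (hc k).1.enorm.pow_const 2]
          simp_rw [← eLpNorm_two_sq, (hc _).eLpNorm_two_sq_eq_ofReal]
      _ = ENNReal.ofReal √(∑' k, ∫ y, c k y ^ 2 ∂ν) ^ 2 := by
          rw [← ENNReal.ofReal_tsum_of_nonneg (fun k => integral_nonneg fun y => sq_nonneg _)
            hc_sum, ← ENNReal.ofReal_pow (Real.sqrt_nonneg _), Real.sq_sqrt hS]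
  calc ∫⁻ y, G y ∂ν = eLpNorm G 1 ν := by simp [eLpNorm_one_eq_lintegral_enorm]
    _ ≤ eLpNorm G 2 ν := eLpNorm_le_eLpNorm_of_exponent_le one_le_two
        (he.aemeasurable_eLpNorm_slice two_ne_zero ENNReal.ofNat_ne_top).aestronglyMeasurable
    _ ≤ _ := (ENNReal.pow_le_pow_left_iff two_ne_zero).1 hsq.le

theorem lintegral_eLpNorm_sub_sum_le_sqrt_tsum [IsProbabilityMeasure ν] {f : α → β → ℝ}
    (hf : MemLp (Function.uncurry f) 2 (μ.prod ν)) {φ : ℕ → α → ℝ} (hφ : ∀ k, MemLp (φ k) 2 μ)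
    {F : ℕ → β → ℝ} (hF : ∀ k, MemLp (F k) 2 ν) (N : ℕ)
    (hF_sum : Summable fun k => ∫ y, F (N + k) y ^ 2 ∂ν)
    (hsq_summable : ∀ᵐ y ∂ν, Summable fun k => F (N + k) y ^ 2)
    (hParseval : ∀ᵐ y ∂ν, ∫ x, (f x y - ∑ k ∈ Finset.range N, F k y * φ k x) ^ 2 ∂μ =
      ∑' k, F (N + k) y ^ 2) :
    ∫⁻ y, eLpNorm (fun x => f x y - ∑ k ∈ Finset.range N, F k y * φ k x) 2 μ ∂ν ≤
      ENNReal.ofReal √(∑' k, ∫ y, F (N + k) y ^ 2 ∂ν) := by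
  refine lintegral_eLpNorm_slice_le_sqrt_tsum
    (e := fun p => f p.1 p.2 - ∑ k ∈ Finset.range N, F k p.2 * φ k p.1)
    (hf.1.sub (Finset.aestronglyMeasurable_fun_sum _ fun k _ =>
      (hF k).1.comp_snd.mul (hφ k).1.comp_fst)) (fun k => hF (N + k)) hF_sum ?_
  filter_upwards [hf.ae_memLp_slice, hsq_summable, hParseval] with y hy hsum hpars
  have hmem : MemLp (fun x => f x y - ∑ k ∈ Finset.range N, F k y * φ k x) 2 μ :=
    hy.sub (memLp_finsetSum _ fun k _ => (hφ k).const_mul (F k y))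
  rw [hmem.eLpNorm_two_sq_eq_ofReal, hpars,
    ENNReal.ofReal_tsum_of_nonneg (fun k => sq_nonneg _) hsum]
  simp [← enorm_pow, Real.enorm_of_nonneg (sq_nonneg _)]

end Prod

end MeasureTheory

theorem stmt_7_general
    {X : Type*} [MeasurableSpace X] (μ : Measure X) [IsFiniteMeasure μ]
    {Np : ℕ} (π : Measure (Fin Np → ℝ)) [IsProbabilityMeasure π]
    -- orthonormal family in `L²(X, μ)`:
    (φ : ℕ → X → ℝ)
    (hφ_L2 : ∀ k, MemLp (φ k) 2 μ)
    (hφ_ortho : ∀ k l, ∫ x, φ k x * φ l x ∂μ = if k = l then 1 else 0)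
    -- `f` jointly measurable, square-integrable w.r.t. `μ ⊗ π`, mean zero:
    (f : X → (Fin Np → ℝ) → ℝ)
    (hf_L2 : MemLp (Function.uncurry f) 2 (μ.prod π))
    -- KL modes `F_k(ξ) = ∫_X f(x,ξ) φ_k(x) dμ(x)`:
    (F : ℕ → (Fin Np → ℝ) → ℝ)
    (hF : ∀ k ξ, F k ξ = ∫ x, f x ξ * φ k x ∂μ)
    (N : ℕ)
    -- Parseval: the expansion of `f(·,ξ)` converges in `L²(X,μ)` for a.e. `ξ`,
    -- so the truncation error equals the tail sum of squared coefficients: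
    (hsq_summable : ∀ᵐ ξ ∂π, Summable fun k : ℕ => (F (N + k) ξ) ^ 2)
    (hParseval : ∀ᵐ ξ ∂π,
      ∫ x, (f x ξ - ∑ k ∈ Finset.range N, F k ξ * φ k x) ^ 2 ∂μ =
        ∑' k : ℕ, (F (N + k) ξ) ^ 2)
    -- eigenvalues `λ_k = ∫ F_k² dπ`, with `Σ λ_k < ∞`:
    (lam : ℕ → ℝ) (hlam : ∀ k, lam k = ∫ ξ, (F k ξ) ^ 2 ∂π)
    (hlam_summable : Summable lam)
    -- active-subspace approximations `g_k` of the retained modes: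
    (g : ℕ → (Fin Np → ℝ) → ℝ)
    (hg_L2 : ∀ k, MemLp (g k) 2 π)
    (δ : ℕ → ℝ) (hδ : ∀ k, 0 ≤ δ k)
    (hbound : ∀ k < N, ∫ ξ, (F k ξ - g k ξ) ^ 2 ∂π ≤ (δ k) ^ 2) :
    ∫ ξ, (∫ x, |f x ξ - ∑ k ∈ Finset.range N, g k ξ * φ k x| ∂μ) ∂π ≤
      Real.sqrt (μ Set.univ).toReal *
        (Real.sqrt (∑' k : ℕ, lam (N + k)) + ∑ k ∈ Finset.range N, δ k) := by
  have hφ_le : ∀ k, eLpNorm (φ k) 2 μ ≤ 1 := fun k => by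
    rw [← ENNReal.pow_le_pow_left_iff two_ne_zero, (hφ_L2 k).eLpNorm_two_sq_eq_ofReal]
    simp [sq, hφ_ortho]
  have hF_L2 : ∀ k, MemLp (F k) 2 π := fun k => by
    simpa only [Function.uncurry_apply_pair, ← hF] using hf_L2.integral_mul_slice (hφ_L2 k)
  rw [← ENNReal.ofReal_le_ofReal_iff (mul_nonneg (Real.sqrt_nonneg _)
    (add_nonneg (Real.sqrt_nonneg _) (Finset.sum_nonneg fun k _ => hδ k)))]
  calc _ ≤ ENNReal.ofReal √(μ Set.univ).toReal *
        (∫⁻ ξ, eLpNorm (fun x => f x ξ - ∑ k ∈ Finset.range N, F k ξ * φ k x) 2 μ ∂π +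
          ∑ k ∈ Finset.range N, ∫⁻ ξ, ‖F k ξ - g k ξ‖ₑ ∂π) :=
        ofReal_integral_integral_abs_sub_sum_le _ (hf_L2.ae_memLp_slice.mono fun ξ hξ => hξ.1)
          (fun k _ => (hφ_L2 k).1) (fun k _ => hφ_le k) (fun k _ => (hF_L2 k).1)
          fun k _ => (hg_L2 k).1
    _ ≤ ENNReal.ofReal √(μ Set.univ).toReal *
        (ENNReal.ofReal √(∑' k, lam (N + k)) + ∑ k ∈ Finset.range N, ENNReal.ofReal (δ k)) := by
        gcongr _ * (?_ + ∑ k ∈ _, ?_) with k hk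
        · simp_rw [hlam]
          exact lintegral_eLpNorm_sub_sum_le_sqrt_tsum hf_L2 hφ_L2 hF_L2 N
            ((hlam_summable.comp_injective (add_right_injective N)).congr fun k => hlam _)
            hsq_summable hParseval
        · exact lintegral_enorm_le_ofReal_of_integral_sq_le ((hF_L2 k).sub (hg_L2 k)) (hδ k)
            (hbound k (Finset.mem_range.1 hk))
    _ = _ := by
        rw [← ENNReal.ofReal_sum_of_nonneg fun k _ => hδ k,
          ← ENNReal.ofReal_add (Real.sqrt_nonneg _) (Finset.sum_nonneg fun k _ => hδ k),
          ← ENNReal.ofReal_mul (Real.sqrt_nonneg _)]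

/-- the expected integrated overall error (KL truncation plus active-subspace
projection of the retained modes) satisfies
`E[Ē] ≤ μ(X)^{1/2} [(Σ_{k=N+1}^∞ λ_k)^{1/2} + Σ_{k=1}^N δ_k]`. -/
theorem stmt_7
    {X : Type*} [MeasurableSpace X] (μ : Measure X) [IsFiniteMeasure μ]
    {Np : ℕ} (π : Measure (Fin Np → ℝ)) [IsProbabilityMeasure π]
    -- orthonormal family in `L²(X, μ)`:
    (φ : ℕ → X → ℝ)
    (hφ_L2 : ∀ k, MemLp (φ k) 2 μ)
    (hφ_ortho : ∀ k l, ∫ x, φ k x * φ l x ∂μ = if k = l then 1 else 0)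
    -- `f` jointly measurable, square-integrable w.r.t. `μ ⊗ π`, mean zero:
    (f : X → (Fin Np → ℝ) → ℝ)
    (hf_meas : Measurable (Function.uncurry f))
    (hf_L2 : MemLp (Function.uncurry f) 2 (μ.prod π))
    (hf_mean : ∀ᵐ x ∂μ, ∫ ξ, f x ξ ∂π = 0)
    -- KL modes `F_k(ξ) = ∫_X f(x,ξ) φ_k(x) dμ(x)`:
    (F : ℕ → (Fin Np → ℝ) → ℝ)
    (hF : ∀ k ξ, F k ξ = ∫ x, f x ξ * φ k x ∂μ)
    (N : ℕ)
    -- Parseval: the expansion of `f(·,ξ)` converges in `L²(X,μ)` for a.e. `ξ`,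
    -- so the truncation error equals the tail sum of squared coefficients:
    (hsq_summable : ∀ᵐ ξ ∂π, Summable fun k : ℕ => (F (N + k) ξ) ^ 2)
    (hParseval : ∀ᵐ ξ ∂π,
      ∫ x, (f x ξ - ∑ k ∈ Finset.range N, F k ξ * φ k x) ^ 2 ∂μ =
        ∑' k : ℕ, (F (N + k) ξ) ^ 2)
    -- eigenvalues `λ_k = ∫ F_k² dπ`, with `Σ λ_k < ∞`:
    (lam : ℕ → ℝ) (hlam : ∀ k, lam k = ∫ ξ, (F k ξ) ^ 2 ∂π)
    (hlam_summable : Summable lam)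
    -- active-subspace approximations `g_k` of the retained modes:
    (g : ℕ → (Fin Np → ℝ) → ℝ)
    (hg_L2 : ∀ k, MemLp (g k) 2 π)
    (δ : ℕ → ℝ) (hδ : ∀ k, 0 ≤ δ k)
    (hbound : ∀ k < N, ∫ ξ, (F k ξ - g k ξ) ^ 2 ∂π ≤ (δ k) ^ 2) :
    ∫ ξ, (∫ x, |f x ξ - ∑ k ∈ Finset.range N, g k ξ * φ k x| ∂μ) ∂π ≤
      Real.sqrt (μ Set.univ).toReal *
        (Real.sqrt (∑' k : ℕ, lam (N + k)) + ∑ k ∈ Finset.range N, δ k) :=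
  stmt_7_general μ π φ hφ_L2 hφ_ortho f hf_L2 F hF N hsq_summable hParseval lam hlam hlam_summable g
    hg_L2 δ hδ hbound
end

section
/- The KL modes are uncorrelated with variances given by the eigenvalues of the covariance operator: for all indices k and l, E[ F_k F_l ] = λ_k if k = l and E[ F_k F_l ] = 0 if k ≠ l, where F_k(ξ) = ∫_X ( f(x,ξ) − f̄(x) ) φ_k(x) dμ(x). In particular E[ F_k² ] = λ_k. -/
/-!
With `g = f - f̄`, the product `F_k F_l` is the integral over `X × X` of
`g(x,ω) φ_k(x) g(y,ω) φ_l(y)`. Integrating over `ω` first turns this into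
`∫∫ φ_k(x) c(x,y) φ_l(y)`, which the eigen-equation and orthonormality reduce to `λ_l δ_kl`.
The interchange is justified by `|ab·cd| ≤ a²d² + c²b²`, which bounds the integrand by products
of integrable functions of separate variables; `g` is square-integrable because
`(∫ f dπ)² ≤ ∫ f² dπ`.
-/

open MeasureTheory

theorem abs_mul_mul_mul_le (a b c d : ℝ) : |a * b * (c * d)| ≤ a ^ 2 * d ^ 2 + c ^ 2 * b ^ 2 := by
  have h : |a * b * (c * d)| = |a * d| * |c * b| := by rw [← abs_mul]; ring_nf
  nlinarith [sq_nonneg (|a * d| - |c * b|), sq_abs (a * d), sq_abs (c * b)]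

namespace MeasureTheory

variable {α β Ω : Type*} [MeasurableSpace α] [MeasurableSpace β] [MeasurableSpace Ω]
  {μ : Measure α} {ν : Measure β} {π : Measure Ω}

theorem sq_integral_le_integral_sq [IsProbabilityMeasure π] {f : Ω → ℝ} (hf : MemLp f 2 π) :
    (∫ ω, f ω ∂π) ^ 2 ≤ ∫ ω, f ω ^ 2 ∂π := by
  have h := ProbabilityTheory.variance_nonneg f π
  rw [ProbabilityTheory.variance_eq_sub hf] at h
  simpa using h

theorem memLp_two_integral_prod_left [SFinite μ] [IsProbabilityMeasure π] {f : α × Ω → ℝ}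
    (hf : MemLp f 2 (μ.prod π)) : MemLp (fun x => ∫ ω, f (x, ω) ∂π) 2 μ := by
  have hsq := hf.integrable_sq
  refine (memLp_two_iff_integrable_sq hf.1.integral_prod_right').2
    (hsq.integral_prod_left.mono' (hf.1.integral_prod_right'.pow 2) ?_)
  filter_upwards [hsq.prod_right_ae, hf.1.prodMk_left] with x hx hmx
  rw [Real.norm_eq_abs, abs_of_nonneg (sq_nonneg _)]
  exact sq_integral_le_integral_sq ((memLp_two_iff_integrable_sq hmx).2 hx)

variable [SFinite μ] [SFinite ν] [SFinite π]

theorem quasiMeasurePreserving_mk_snd_fst_fst :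
    Measure.QuasiMeasurePreserving (fun q : Ω × (α × β) => (q.2.1, q.1))
      (π.prod (μ.prod ν)) (μ.prod π) :=
  Measure.measurePreserving_swap.quasiMeasurePreserving.comp <|
    Measure.quasiMeasurePreserving_fst.comp
      (measurePreserving_prodAssoc π μ ν).symm.quasiMeasurePreserving

theorem quasiMeasurePreserving_mk_snd_snd_fst :
    Measure.QuasiMeasurePreserving (fun q : Ω × (α × β) => (q.2.2, q.1))
      (π.prod (μ.prod ν)) (ν.prod π) :=
  quasiMeasurePreserving_mk_snd_fst_fst.comp
    ((MeasurePreserving.id π).prod Measure.measurePreserving_swap).quasiMeasurePreserving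

theorem Integrable.mul_prod_fst {w : α × Ω → ℝ} (hw : Integrable w (μ.prod π)) {ρ : β → ℝ}
    (hρ : Integrable ρ ν) :
    Integrable (fun q : Ω × (α × β) => w (q.2.1, q.1) * ρ q.2.2) (π.prod (μ.prod ν)) :=
  (measurePreserving_prodAssoc π μ ν).symm.integrable_comp_of_integrable (hw.swap.mul_prod hρ)

theorem Integrable.mul_prod_snd {w : β × Ω → ℝ} (hw : Integrable w (ν.prod π)) {ρ : α → ℝ}
    (hρ : Integrable ρ μ) :
    Integrable (fun q : Ω × (α × β) => w (q.2.2, q.1) * ρ q.2.1) (π.prod (μ.prod ν)) :=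
  ((MeasurePreserving.id π).prod Measure.measurePreserving_swap).integrable_comp_of_integrable
    (hw.mul_prod_fst hρ)

theorem integrable_mul_mul_of_memLp_two {u : α × Ω → ℝ} {v : β × Ω → ℝ}
    (hu : MemLp u 2 (μ.prod π)) (hv : MemLp v 2 (ν.prod π)) {ψ : α → ℝ} {χ : β → ℝ}
    (hψ : MemLp ψ 2 μ) (hχ : MemLp χ 2 ν) :
    Integrable (fun q : Ω × (α × β) => u (q.2.1, q.1) * ψ q.2.1 * (v (q.2.2, q.1) * χ q.2.2))
      (π.prod (μ.prod ν)) := by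
  have hu' := hu.1.comp_quasiMeasurePreserving (quasiMeasurePreserving_mk_snd_fst_fst (ν := ν))
  have hv' := hv.1.comp_quasiMeasurePreserving (quasiMeasurePreserving_mk_snd_snd_fst (μ := μ))
  refine Integrable.mono' ((hu.integrable_sq.mul_prod_fst hχ.integrable_sq).add
      (hv.integrable_sq.mul_prod_snd hψ.integrable_sq))
    ((hu'.mul hψ.1.comp_fst.comp_snd).mul (hv'.mul hχ.1.comp_snd.comp_snd)) ?_
  filter_upwards with q
  exact abs_mul_mul_mul_le ..

theorem integral_mul_integral_swap {A : α → Ω → ℝ} {B : β → Ω → ℝ}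
    (h : Integrable (fun q : Ω × (α × β) => A q.2.1 q.1 * B q.2.2 q.1) (π.prod (μ.prod ν))) :
    ∫ ω, (∫ x, A x ω ∂μ) * (∫ y, B y ω ∂ν) ∂π = ∫ x, ∫ y, ∫ ω, A x ω * B y ω ∂π ∂ν ∂μ := by
  simp_rw [← integral_prod_mul (μ := μ) (ν := ν)]
  rw [integral_integral_swap h, integral_prod _ h.integral_prod_right]

end MeasureTheory

theorem stmt_9_general
    {X : Type*} [MeasurableSpace X] (μ : Measure X) [IsFiniteMeasure μ]
    {Ω : Type*} [MeasurableSpace Ω] (π : Measure Ω) [IsProbabilityMeasure π]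
    -- `f` jointly measurable and square-integrable w.r.t. `μ ⊗ π`:
    (f : X → Ω → ℝ)
    (hf_L2 : MemLp (Function.uncurry f) 2 (μ.prod π))
    -- mean field and covariance function:
    (fbar : X → ℝ) (hfbar : ∀ x, fbar x = ∫ ω, f x ω ∂π)
    (c : X → X → ℝ)
    (hc : ∀ x y, c x y = ∫ ω, (f x ω - fbar x) * (f y ω - fbar y) ∂π)
    -- orthonormal eigenfunctions of the covariance operator:
    {I : Type*} [DecidableEq I]
    (φ : I → X → ℝ) (lam : I → ℝ)
    (hφ_L2 : ∀ k, MemLp (φ k) 2 μ)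
    (hφ_ortho : ∀ k l, ∫ x, φ k x * φ l x ∂μ = if k = l then 1 else 0)
    (heig : ∀ k, ∀ᵐ x ∂μ, ∫ y, c x y * φ k y ∂μ = lam k * φ k x)
    -- KL modes `F_k(ω) = ∫_X (f(x,ω) − f̄(x)) φ_k(x) dμ(x)`:
    (F : I → Ω → ℝ)
    (hF : ∀ k ω, F k ω = ∫ x, (f x ω - fbar x) * φ k x ∂μ) :
    ∀ k l, ∫ ω, F k ω * F l ω ∂π = if k = l then lam k else 0 := by
  intro k l
  have hfbar_L2 : MemLp fbar 2 μ := by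
    rw [funext hfbar]
    exact memLp_two_integral_prod_left hf_L2
  have hg_L2 : MemLp (fun p : X × Ω => f p.1 p.2 - fbar p.1) 2 (μ.prod π) :=
    hf_L2.sub (hfbar_L2.comp_fst π)
  calc ∫ ω, F k ω * F l ω ∂π
      = ∫ x, ∫ y, ∫ ω, (f x ω - fbar x) * φ k x * ((f y ω - fbar y) * φ l y) ∂π ∂μ ∂μ := by
        simp_rw [hF]
        exact integral_mul_integral_swap
          (integrable_mul_mul_of_memLp_two hg_L2 hg_L2 (hφ_L2 k) (hφ_L2 l))
    _ = ∫ x, φ k x * ∫ y, c x y * φ l y ∂μ ∂μ := by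
        simp_rw [hc, ← integral_mul_const, ← integral_const_mul]
        congr 1 with x; congr 1 with y; congr 1 with ω
        ring
    _ = ∫ x, φ k x * (lam l * φ l x) ∂μ :=
        integral_congr_ae <| (heig l).mono fun x hx => congrArg (φ k x * ·) hx
    _ = if k = l then lam k else 0 := by
        simp_rw [mul_left_comm (φ k _), integral_const_mul, hφ_ortho]
        split_ifs with h <;> simp [h]

/-- the KL modes are uncorrelated with variances given by the eigenvalues of
the covariance operator: `E[F_k F_l] = λ_k` if `k = l` and `0` otherwise. -/
theorem stmt_9
    {X : Type*} [MeasurableSpace X] (μ : Measure X) [IsFiniteMeasure μ]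
    {Ω : Type*} [MeasurableSpace Ω] (π : Measure Ω) [IsProbabilityMeasure π]
    -- `f` jointly measurable and square-integrable w.r.t. `μ ⊗ π`:
    (f : X → Ω → ℝ)
    (hf_meas : Measurable (Function.uncurry f))
    (hf_L2 : MemLp (Function.uncurry f) 2 (μ.prod π))
    -- mean field and covariance function:
    (fbar : X → ℝ) (hfbar : ∀ x, fbar x = ∫ ω, f x ω ∂π)
    (c : X → X → ℝ)
    (hc : ∀ x y, c x y = ∫ ω, (f x ω - fbar x) * (f y ω - fbar y) ∂π)
    -- orthonormal eigenfunctions of the covariance operator: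
    {I : Type*} [DecidableEq I]
    (φ : I → X → ℝ) (lam : I → ℝ)
    (hφ_L2 : ∀ k, MemLp (φ k) 2 μ)
    (hφ_ortho : ∀ k l, ∫ x, φ k x * φ l x ∂μ = if k = l then 1 else 0)
    (heig : ∀ k, ∀ᵐ x ∂μ, ∫ y, c x y * φ k y ∂μ = lam k * φ k x)
    -- KL modes `F_k(ω) = ∫_X (f(x,ω) − f̄(x)) φ_k(x) dμ(x)`:
    (F : I → Ω → ℝ)
    (hF : ∀ k ω, F k ω = ∫ x, (f x ω - fbar x) * φ k x ∂μ) :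
    ∀ k l, ∫ ω, F k ω * F l ω ∂π = if k = l then lam k else 0 :=
  stmt_9_general μ π f hf_L2 fbar hfbar c hc φ lam hφ_L2 hφ_ortho heig F hF
end
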